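/- Let G ∈ {0,1}^{n×k} be a partition indicator matrix (each row has exactly one entry equal to 1 and every column is nonzero), and let 𝒰 ∈ ℝ^{k×k} be orthogonal. Set V = G(GᵀG)^{−1/2}𝒰 and define the row-normalized matrix Ṽ = diag(VVᵀ)^{−1/2} V. Then Ṽ = G𝒰. -/
import Mathlib


open Matrix

theorem stmt_3 {n k : ℕ} (G : Matrix (Fin n) (Fin k) ℝ) (𝒰 : Matrix (Fin k) (Fin k) ℝ)
    (hG01 : ∀ i j, G i j = 0 ∨ G i j = 1)
    (hGrow : ∀ i, ∃! j, G i j = 1)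
    (hGcol : ∀ j, ∃ i, G i j = 1)
    (hU : 𝒰 * 𝒰ᵀ = 1 ∧ 𝒰ᵀ * 𝒰 = 1)
    (V : Matrix (Fin n) (Fin k) ℝ)
    (hV : V = G * Matrix.diagonal (fun j => (Real.sqrt ((Gᵀ * G) j j))⁻¹) * 𝒰)
    (hpos : ∀ i, 0 < (V * Vᵀ) i i) :
    Matrix.diagonal (fun i => (Real.sqrt ((V * Vᵀ) i i))⁻¹) * V = G * 𝒰 := by
  set d : Fin k → ℝ := fun j => (Real.sqrt ((Gᵀ * G) j j))⁻¹ with hd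
  -- positivity of GᵀG diagonal
  have hGtG : ∀ j, 0 < (Gᵀ * G) j j := by
    intro j
    obtain ⟨i, hi⟩ := hGcol j
    have : (Gᵀ * G) j j = ∑ m, G m j * G m j := by
      simp [Matrix.mul_apply, Matrix.transpose_apply]
    rw [this]
    have hnn : ∀ m ∈ Finset.univ, (0:ℝ) ≤ G m j * G m j := fun m _ => mul_self_nonneg _
    calc (0:ℝ) < G i j * G i j := by rw [hi]; norm_num
    _ ≤ ∑ m, G m j * G m j := Finset.single_le_sum hnn (Finset.mem_univ i)
  have hdpos : ∀ j, 0 < d j := fun j =>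
    inv_pos.mpr (Real.sqrt_pos.mpr (hGtG j))
  -- row structure
  have key : ∀ i, ∃ j0, G i j0 = 1 ∧ (∀ l, l ≠ j0 → G i l = 0) := by
    intro i
    obtain ⟨j0, hj0, huniq⟩ := hGrow i
    exact ⟨j0, hj0, fun l hl => (hG01 i l).resolve_right (fun h => hl (huniq l h))⟩
  have hVim : ∀ i, ∀ j0, G i j0 = 1 → (∀ l, l ≠ j0 → G i l = 0) →
      ∀ m, V i m = d j0 * 𝒰 j0 m := by
    intro i j0 h1 h0 m
    rw [hV]
    rw [Matrix.mul_apply]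
    have : ∀ l, (G * Matrix.diagonal d) i l = G i l * d l := by
      intro l; rw [Matrix.mul_diagonal]
    simp_rw [this]
    rw [Finset.sum_eq_single j0]
    · rw [h1, one_mul]
    · intro l _ hl; rw [h0 l hl]; ring
    · intro h; exact absurd (Finset.mem_univ j0) h
  ext i j'
  obtain ⟨j0, h1, h0⟩ := key i
  have hVV : (V * Vᵀ) i i = d j0 * d j0 := by
    rw [Matrix.mul_apply]
    have : ∀ m, V i m * Vᵀ m i = (d j0 * d j0) * (𝒰 j0 m * 𝒰ᵀ m j0) := by
      intro m
      rw [Matrix.transpose_apply, Matrix.transpose_apply, hVim i j0 h1 h0 m]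
      ring
    simp_rw [this]
    rw [← Finset.mul_sum, ← Matrix.mul_apply, hU.1]
    simp
  have hsqrt : Real.sqrt ((V * Vᵀ) i i) = d j0 := by
    rw [hVV, Real.sqrt_mul_self (le_of_lt (hdpos j0))]
  rw [Matrix.diagonal_mul, hsqrt, hVim i j0 h1 h0 j', Matrix.mul_apply]
  rw [Finset.sum_eq_single j0]
  · rw [h1, one_mul, ← mul_assoc, inv_mul_cancel₀ (ne_of_gt (hdpos j0)), one_mul]
  · intro l _ hl; rw [h0 l hl]; ring
  · intro h; exact absurd (Finset.mem_univ j0) h
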